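/- arXiv:2412.20572 — 5 statements merged into one kernel-verified Lean document; each statement's English description precedes it below -/
import Mathlib

section
/- Let (Ω, F, P) be a probability space and Y₁, Y₂ : Ω → ℝ be square-integrable random variables with laws μ₁ and μ₂ respectively. Then ∫_ℝ |μ̂₁(y) − μ̂₂(y)|² e^{−y²} dy ≤ π · E[(Y₁ − Y₂)²]. -/
/-!
Since `|e^{-iay} - e^{-iby}| ≤ |y| |a - b|`, coupling the two laws through `P` gives
`|μ̂₁(y) - μ̂₂(y)| ≤ |y| E|Y₁ - Y₂|`, hence by Jensen `|μ̂₁(y) - μ̂₂(y)|² ≤ y² E[(Y₁ - Y₂)²]`.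
Integrating against `e^{-y²}` leaves the Gaussian moment `∫ y² e^{-y²} dy = Γ(3/2) = √π / 2 ≤ π`.
-/

open MeasureTheory Complex

/-- The characteristic function (Fourier transform) of a measure `μ` on `ℝ`:
`μ̂(y) = ∫ e^{-ixy} μ(dx)`. -/
noncomputable def charFun (μ : Measure ℝ) (y : ℝ) : ℂ :=
  ∫ x, Complex.exp (-(Complex.I * x * y)) ∂μ

open ProbabilityTheory

lemma norm_cexp_neg_I_mul_sub_le (a b y : ℝ) :
    ‖cexp (-(I * a * y)) - cexp (-(I * b * y))‖ ≤ |y| * |a - b| := by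
  have hfactor : cexp (-(I * a * y)) - cexp (-(I * b * y))
      = cexp (((-(b * y) : ℝ) : ℂ) * I) * (cexp (I * ((b - a) * y : ℝ)) - 1) := by
    rw [mul_sub, ← Complex.exp_add, mul_one]
    push_cast
    ring_nf
  rw [hfactor, norm_mul, Complex.norm_exp_ofReal_mul_I, one_mul]
  calc _ ≤ ‖(b - a) * y‖ := Real.norm_exp_I_mul_ofReal_sub_one_le
    _ = |y| * |a - b| := by rw [Real.norm_eq_abs, abs_mul, abs_sub_comm, mul_comm]

section

variable {Ω : Type*} [MeasurableSpace Ω] {P : Measure Ω}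

lemma sq_integral_abs_le_integral_sq [IsProbabilityMeasure P] {Z : Ω → ℝ} (hZ : MemLp Z 2 P) :
    (∫ ω, |Z ω| ∂P) ^ 2 ≤ ∫ ω, Z ω ^ 2 ∂P := by
  have hvar := variance_eq_sub hZ.abs
  have := variance_nonneg |Z| P
  simp only [Pi.abs_apply, Pi.pow_apply, sq_abs] at hvar
  linarith

lemma charFun_map {Y : Ω → ℝ} (hY : AEMeasurable Y P) (y : ℝ) :
    _root_.charFun (P.map Y) y = ∫ ω, cexp (-(I * Y ω * y)) ∂P :=
  integral_map hY (by fun_prop)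

lemma integrable_cexp_neg_I_mul [IsFiniteMeasure P] {Y : Ω → ℝ} (hY : AEMeasurable Y P) (y : ℝ) :
    Integrable (fun ω ↦ cexp (-(I * Y ω * y))) P := by
  refine (integrable_const (1 : ℝ)).mono' (by fun_prop) (.of_forall fun ω ↦ le_of_eq ?_)
  rw [show -(I * Y ω * y) = (-(Y ω * y) : ℝ) * I by push_cast; ring,
    Complex.norm_exp_ofReal_mul_I]

lemma norm_charFun_map_sub_le [IsFiniteMeasure P] {Y₁ Y₂ : Ω → ℝ} (hY₁ : AEMeasurable Y₁ P)
    (hY₂ : AEMeasurable Y₂ P) (hY : Integrable (fun ω ↦ Y₁ ω - Y₂ ω) P) (y : ℝ) :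
    ‖_root_.charFun (P.map Y₁) y - _root_.charFun (P.map Y₂) y‖
      ≤ |y| * ∫ ω, |Y₁ ω - Y₂ ω| ∂P := by
  rw [charFun_map hY₁, charFun_map hY₂, ← integral_sub (integrable_cexp_neg_I_mul hY₁ y)
    (integrable_cexp_neg_I_mul hY₂ y), ← integral_const_mul]
  exact (norm_integral_le_integral_norm _).trans <| integral_mono_of_nonneg
    (.of_forall fun _ ↦ norm_nonneg _) (hY.abs.const_mul _)
    (.of_forall fun ω ↦ norm_cexp_neg_I_mul_sub_le _ _ _)

lemma sq_norm_charFun_map_sub_le [IsProbabilityMeasure P] {Y₁ Y₂ : Ω → ℝ}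
    (hY₁ : AEMeasurable Y₁ P) (hY₂ : AEMeasurable Y₂ P) (hY : MemLp (fun ω ↦ Y₁ ω - Y₂ ω) 2 P)
    (y : ℝ) :
    ‖_root_.charFun (P.map Y₁) y - _root_.charFun (P.map Y₂) y‖ ^ 2
      ≤ y ^ 2 * ∫ ω, (Y₁ ω - Y₂ ω) ^ 2 ∂P :=
  calc _ ≤ (|y| * ∫ ω, |Y₁ ω - Y₂ ω| ∂P) ^ 2 := by
        gcongr
        exact norm_charFun_map_sub_le hY₁ hY₂ (hY.integrable one_le_two) y
    _ ≤ y ^ 2 * ∫ ω, (Y₁ ω - Y₂ ω) ^ 2 ∂P := by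
        rw [mul_pow, sq_abs]
        gcongr
        exact sq_integral_abs_le_integral_sq hY

end

lemma integrable_sq_mul_exp_neg_sq : Integrable (fun y : ℝ ↦ y ^ 2 * Real.exp (-y ^ 2)) := by
  simpa [Real.rpow_two] using
    integrable_rpow_mul_exp_neg_mul_sq (b := 1) one_pos (s := 2) (by norm_num)

lemma integral_sq_mul_exp_neg_sq : ∫ y : ℝ, y ^ 2 * Real.exp (-y ^ 2) = √Real.pi / 2 := by
  have hΓ : Real.Gamma (3 / 2) = √Real.pi / 2 := by
    rw [show (3 / 2 : ℝ) = 1 / 2 + 1 by norm_num, Real.Gamma_add_one (by norm_num),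
      Real.Gamma_one_half_eq]
    ring
  have hhalf := integral_rpow_mul_exp_neg_rpow (p := 2) (q := 2) two_pos (by norm_num)
  have hsymm := integral_comp_abs (f := fun x : ℝ ↦ x ^ (2 : ℝ) * Real.exp (-x ^ (2 : ℝ)))
  simp only [Real.rpow_two, sq_abs] at hsymm hhalf
  rw [hsymm, hhalf, show ((2 : ℝ) + 1) / 2 = 3 / 2 by norm_num, hΓ]
  ring

lemma sqrt_pi_div_two_le_pi : √Real.pi / 2 ≤ Real.pi :=
  (half_le_self (Real.sqrt_nonneg _)).trans
    (Real.sqrt_le_self_iff.2 (.inr (by linarith [Real.pi_gt_three])))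

/-- For square-integrable real random variables `Y₁, Y₂` with laws `μ₁, μ₂`:
`∫ |μ̂₁(y) − μ̂₂(y)|² e^{−y²} dy ≤ π · E[(Y₁ − Y₂)²]`. -/
theorem integral_sq_norm_charFun_sub_le
    {Ω : Type*} [MeasurableSpace Ω] (P : Measure Ω) [IsProbabilityMeasure P]
    (Y₁ Y₂ : Ω → ℝ) (hY₁ : MemLp Y₁ 2 P) (hY₂ : MemLp Y₂ 2 P)
    (μ₁ μ₂ : Measure ℝ) (hμ₁ : μ₁ = P.map Y₁) (hμ₂ : μ₂ = P.map Y₂) :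
    ∫ y : ℝ, ‖_root_.charFun μ₁ y - _root_.charFun μ₂ y‖ ^ 2 * Real.exp (-y ^ 2)
      ≤ Real.pi * ∫ ω, (Y₁ ω - Y₂ ω) ^ 2 ∂P := by
  subst hμ₁ hμ₂
  set B := ∫ ω, (Y₁ ω - Y₂ ω) ^ 2 ∂P
  have hB : 0 ≤ B := integral_nonneg fun _ ↦ sq_nonneg _
  have hpointwise (y : ℝ) :
      ‖_root_.charFun (P.map Y₁) y - _root_.charFun (P.map Y₂) y‖ ^ 2 * Real.exp (-y ^ 2)
        ≤ B * (y ^ 2 * Real.exp (-y ^ 2)) := by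
    have := sq_norm_charFun_map_sub_le hY₁.aemeasurable hY₂.aemeasurable (hY₁.sub hY₂) y
    calc _ ≤ y ^ 2 * B * Real.exp (-y ^ 2) := by gcongr
      _ = B * (y ^ 2 * Real.exp (-y ^ 2)) := by ring
  calc _ ≤ ∫ y : ℝ, B * (y ^ 2 * Real.exp (-y ^ 2)) :=
        integral_mono_of_nonneg (.of_forall fun _ ↦ by positivity)
          (integrable_sq_mul_exp_neg_sq.const_mul B) (.of_forall hpointwise)
    _ = B * (√Real.pi / 2) := by rw [integral_const_mul, integral_sq_mul_exp_neg_sq]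
    _ ≤ Real.pi * B := by
        rw [mul_comm Real.pi]
        gcongr
        exact sqrt_pi_div_two_le_pi
end

section
/- (Two-parameter Gronwall lemma.) Let T, X > 0 and let f : ℝ² → ℝ be a measurable, non-negative and bounded function on R = [0,T] × [0,X]. Suppose there exists a constant C₀ > 0 with C₀ · T · X ≤ r₀ such that f(t,x) ≤ C₀ ∫₀ᵗ ∫₀ˣ f(s,a) da ds for all (t,x) ∈ R. Then f vanishes on R, i.e. f(t,x) = 0 for all (t,x) ∈ R. -/
open MeasureTheory Set Filter

/-- `r₀` is the first positive zero of `t ↦ ∑_{j≥0} (−1)^j t^j/(j!)² = J₀(2√t)`. -/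
noncomputable def r₀ : ℝ :=
  sInf {t : ℝ | 0 < t ∧ (∑' j : ℕ, ((-1 : ℝ) ^ j * t ^ j / ((j.factorial : ℝ)) ^ 2)) = 0}

/-- **Two-parameter Gronwall lemma.** If `f` is measurable, non-negative and bounded on
`[0,T] × [0,X]`, and `f(t,x) ≤ C₀ ∫₀ᵗ∫₀ˣ f(s,a) da ds` with `0 < C₀` and `C₀·T·X ≤ r₀`,
then `f` vanishes on `[0,T] × [0,X]`. -/
theorem two_parameter_gronwall
    (T X : ℝ) (hT : 0 < T) (hX : 0 < X) (f : ℝ × ℝ → ℝ) (hmeas : Measurable f)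
    (hnonneg : ∀ t ∈ Icc (0 : ℝ) T, ∀ x ∈ Icc (0 : ℝ) X, 0 ≤ f (t, x))
    (hbdd : ∃ M : ℝ, ∀ t ∈ Icc (0 : ℝ) T, ∀ x ∈ Icc (0 : ℝ) X, f (t, x) ≤ M)
    (C₀ : ℝ) (hC₀ : 0 < C₀) (hr : C₀ * T * X ≤ r₀)
    (hineq : ∀ t ∈ Icc (0 : ℝ) T, ∀ x ∈ Icc (0 : ℝ) X,
      f (t, x) ≤ C₀ * ∫ s in (0 : ℝ)..t, ∫ a in (0 : ℝ)..x, f (s, a)) :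
    ∀ t ∈ Icc (0 : ℝ) T, ∀ x ∈ Icc (0 : ℝ) X, f (t, x) = 0 := by
  obtain ⟨M, hM⟩ := hbdd
  have h00T : (0:ℝ) ∈ Icc (0:ℝ) T := ⟨le_refl _, hT.le⟩
  have h00X : (0:ℝ) ∈ Icc (0:ℝ) X := ⟨le_refl _, hX.le⟩
  have hM0 : 0 ≤ M := le_trans (hnonneg 0 h00T 0 h00X) (hM 0 h00T 0 h00X)
  have key : ∀ n : ℕ, ∀ t ∈ Icc (0:ℝ) T, ∀ x ∈ Icc (0:ℝ) X,
      f (t, x) ≤ M * C₀ ^ n * t ^ n * x ^ n / ((n.factorial : ℝ)) ^ 2 := by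
    intro n
    induction n with
    | zero => intro t ht x hx; simpa using hM t ht x hx
    | succ n ih =>
      intro t ht x hx
      have ht0 : (0:ℝ) ≤ t := ht.1
      have hx0 : (0:ℝ) ≤ x := hx.1
      have hfac : (0:ℝ) < (n.factorial : ℝ) := by exact_mod_cast n.factorial_pos
      -- inner bound
      have hinner : ∀ s ∈ Icc (0:ℝ) T,
          (∫ a in (0:ℝ)..x, f (s, a)) ≤
            (M * C₀ ^ n * s ^ n / ((n.factorial : ℝ)) ^ 2) * (x ^ (n+1) / (n+1)) := by
        intro s hs
        have hcont : Continuous fun a : ℝ =>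
            (M * C₀ ^ n * s ^ n / ((n.factorial : ℝ)) ^ 2) * a ^ n := continuous_const.mul (continuous_pow n)
        have hle : (∫ a in (0:ℝ)..x, f (s, a)) ≤
            ∫ a in (0:ℝ)..x, (M * C₀ ^ n * s ^ n / ((n.factorial : ℝ)) ^ 2) * a ^ n := by
          rw [intervalIntegral.integral_of_le hx0, intervalIntegral.integral_of_le hx0]
          apply integral_mono_of_nonneg
          · refine (ae_restrict_iff' measurableSet_Ioc).2 (ae_of_all _ fun a ha => ?_)
            exact hnonneg s hs a ⟨ha.1.le, ha.2.trans hx.2⟩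
          · exact (hcont.intervalIntegrable 0 x).1
          · refine (ae_restrict_iff' measurableSet_Ioc).2 (ae_of_all _ fun a ha => ?_)
            calc f (s, a) ≤ M * C₀ ^ n * s ^ n * a ^ n / ((n.factorial : ℝ)) ^ 2 :=
                  ih s hs a ⟨ha.1.le, ha.2.trans hx.2⟩
              _ = (M * C₀ ^ n * s ^ n / ((n.factorial : ℝ)) ^ 2) * a ^ n := by ring
        calc (∫ a in (0:ℝ)..x, f (s, a))
            ≤ ∫ a in (0:ℝ)..x, (M * C₀ ^ n * s ^ n / ((n.factorial : ℝ)) ^ 2) * a ^ n := hle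
          _ = (M * C₀ ^ n * s ^ n / ((n.factorial : ℝ)) ^ 2) * (x ^ (n+1) / (n+1)) := by
              rw [intervalIntegral.integral_const_mul, integral_pow]
              simp
      -- outer bound
      have hcont2 : Continuous fun s : ℝ =>
          (M * C₀ ^ n / ((n.factorial : ℝ)) ^ 2 * (x ^ (n+1) / (n+1))) * s ^ n := continuous_const.mul (continuous_pow n)
      have houter : (∫ s in (0:ℝ)..t, ∫ a in (0:ℝ)..x, f (s, a)) ≤
          (M * C₀ ^ n / ((n.factorial : ℝ)) ^ 2 * (x ^ (n+1) / (n+1))) * (t ^ (n+1) / (n+1)) := by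
        have hle : (∫ s in (0:ℝ)..t, ∫ a in (0:ℝ)..x, f (s, a)) ≤
            ∫ s in (0:ℝ)..t,
              (M * C₀ ^ n / ((n.factorial : ℝ)) ^ 2 * (x ^ (n+1) / (n+1))) * s ^ n := by
          rw [intervalIntegral.integral_of_le ht0, intervalIntegral.integral_of_le ht0]
          apply integral_mono_of_nonneg
          · refine (ae_restrict_iff' measurableSet_Ioc).2 (ae_of_all _ fun s hsm => ?_)
            exact intervalIntegral.integral_nonneg hx0 fun a ha =>
              hnonneg s ⟨hsm.1.le, hsm.2.trans ht.2⟩ a ⟨ha.1, ha.2.trans hx.2⟩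
          · exact (hcont2.intervalIntegrable 0 t).1
          · refine (ae_restrict_iff' measurableSet_Ioc).2 (ae_of_all _ fun s hsm => ?_)
            calc (∫ a in (0:ℝ)..x, f (s, a))
                ≤ (M * C₀ ^ n * s ^ n / ((n.factorial : ℝ)) ^ 2) * (x ^ (n+1) / (n+1)) :=
                  hinner s ⟨hsm.1.le, hsm.2.trans ht.2⟩
              _ = (M * C₀ ^ n / ((n.factorial : ℝ)) ^ 2 * (x ^ (n+1) / (n+1))) * s ^ n := by
                  ring
        calc (∫ s in (0:ℝ)..t, ∫ a in (0:ℝ)..x, f (s, a))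
            ≤ ∫ s in (0:ℝ)..t,
                (M * C₀ ^ n / ((n.factorial : ℝ)) ^ 2 * (x ^ (n+1) / (n+1))) * s ^ n := hle
          _ = (M * C₀ ^ n / ((n.factorial : ℝ)) ^ 2 * (x ^ (n+1) / (n+1))) * (t ^ (n+1) / (n+1)) := by
              rw [intervalIntegral.integral_const_mul, integral_pow]
              simp
      calc f (t, x) ≤ C₀ * ∫ s in (0:ℝ)..t, ∫ a in (0:ℝ)..x, f (s, a) := hineq t ht x hx
        _ ≤ C₀ * ((M * C₀ ^ n / ((n.factorial : ℝ)) ^ 2 * (x ^ (n+1) / (n+1)))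
              * (t ^ (n+1) / (n+1))) := by
            exact mul_le_mul_of_nonneg_left houter hC₀.le
        _ = M * C₀ ^ (n+1) * t ^ (n+1) * x ^ (n+1) / (((n+1).factorial : ℝ)) ^ 2 := by
            rw [Nat.factorial_succ]
            push_cast
            have h1 : ((n:ℝ) + 1) ≠ 0 := by positivity
            field_simp
            ring
  -- conclude
  intro t ht x hx
  have hr0 : (0:ℝ) ≤ C₀ * t * x := mul_nonneg (mul_nonneg hC₀.le ht.1) hx.1
  have h1 : ∀ n : ℕ, f (t, x) ≤ M * (C₀ * t * x) ^ n / (n.factorial : ℝ) := by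
    intro n
    have hfac : (0:ℝ) < (n.factorial : ℝ) := by exact_mod_cast n.factorial_pos
    have hfacsq : (n.factorial : ℝ) ≤ ((n.factorial : ℝ)) ^ 2 := by
      have : (1:ℝ) ≤ (n.factorial : ℝ) := by exact_mod_cast n.factorial_pos
      nlinarith
    calc f (t, x) ≤ M * C₀ ^ n * t ^ n * x ^ n / ((n.factorial : ℝ)) ^ 2 := key n t ht x hx
      _ = (M * (C₀ * t * x) ^ n) / ((n.factorial : ℝ)) ^ 2 := by ring
      _ ≤ (M * (C₀ * t * x) ^ n) / (n.factorial : ℝ) := by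
          exact div_le_div_of_nonneg_left (mul_nonneg hM0 (pow_nonneg hr0 n)) hfac hfacsq
      _ = M * (C₀ * t * x) ^ n / (n.factorial : ℝ) := rfl
  have hlim : Tendsto (fun n : ℕ => M * (C₀ * t * x) ^ n / (n.factorial : ℝ)) atTop (nhds 0) := by
    have := (FloorSemiring.tendsto_pow_div_factorial_atTop (C₀ * t * x)).const_mul M
    simpa [mul_div_assoc] using this
  have hle0 : f (t, x) ≤ 0 := ge_of_tendsto' hlim h1
  exact le_antisymm hle0 (hnonneg t ht x hx)
end

section
/- Let T, X > 0 and let f : ℝ² → ℝ be a measurable, non-negative and bounded function on R = [0,T] × [0,X] such that f(t,x) ≤ C₀ ∫₀ᵗ ∫₀ˣ f(s,a) da ds for all (t,x) ∈ R, where C₀ > 0. Then for every n ∈ ℕ and every (t,x) ∈ R, f(t,x) ≤ C₀ⁿ (t·x)ⁿ / (n!)² · sup_{(s,a) ∈ R} f(s,a). -/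
/-!
Induction on `n`: feeding the bound for `n` into the integral inequality and using
`∫₀ᵗ∫₀ˣ (s a)ⁿ da ds = (t x)ⁿ⁺¹ / (n + 1)²` together with `(n + 1)² (n!)² = ((n + 1)!)²`
gives the bound for `n + 1`. Monotonicity of the iterated integral goes through Fubini,
which needs `f` integrable on the rectangle; measurability and boundedness provide that.
-/

open MeasureTheory Set

open scoped Nat

section IteratedIntegral

variable {f g : ℝ × ℝ → ℝ} {a b c d : ℝ}

theorem intervalIntegral_intervalIntegral_eq_setIntegral_prod (hab : a ≤ b) (hcd : c ≤ d)
    (hf : IntegrableOn f (Ioc a b ×ˢ Ioc c d)) :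
    ∫ s in a..b, ∫ y in c..d, f (s, y) = ∫ p in Ioc a b ×ˢ Ioc c d, f p := by
  rw [Measure.volume_eq_prod, setIntegral_prod f hf, intervalIntegral.integral_of_le hab]
  simp_rw [intervalIntegral.integral_of_le hcd]

theorem intervalIntegral_intervalIntegral_mono (hab : a ≤ b) (hcd : c ≤ d)
    (hf : IntegrableOn f (Ioc a b ×ˢ Ioc c d)) (hg : IntegrableOn g (Ioc a b ×ˢ Ioc c d))
    (hfg : ∀ p ∈ Ioc a b ×ˢ Ioc c d, f p ≤ g p) :
    ∫ s in a..b, ∫ y in c..d, f (s, y) ≤ ∫ s in a..b, ∫ y in c..d, g (s, y) := by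
  rw [intervalIntegral_intervalIntegral_eq_setIntegral_prod hab hcd hf,
    intervalIntegral_intervalIntegral_eq_setIntegral_prod hab hcd hg]
  exact setIntegral_mono_on hf hg (measurableSet_Ioc.prod measurableSet_Ioc) hfg

end IteratedIntegral

noncomputable def gronwallIterate (C S : ℝ) (n : ℕ) (p : ℝ × ℝ) : ℝ :=
  C ^ n * (p.1 * p.2) ^ n / (n ! : ℝ) ^ 2 * S

theorem continuous_gronwallIterate (C S : ℝ) (n : ℕ) : Continuous (gronwallIterate C S n) := by
  unfold gronwallIterate
  fun_prop

theorem mul_integral_integral_gronwallIterate (C S : ℝ) (n : ℕ) (t x : ℝ) :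
    C * ∫ s in (0 : ℝ)..t, ∫ a in (0 : ℝ)..x, gronwallIterate C S n (s, a) =
      gronwallIterate C S (n + 1) (t, x) := by
  have hsplit (s a : ℝ) :
      gronwallIterate C S n (s, a) = C ^ n / (n ! : ℝ) ^ 2 * S * s ^ n * a ^ n := by
    unfold gronwallIterate; ring
  simp_rw [hsplit, intervalIntegral.integral_const_mul, integral_pow,
    intervalIntegral.integral_mul_const, intervalIntegral.integral_const_mul, integral_pow]
  unfold gronwallIterate
  rw [Nat.factorial_succ]
  push_cast
  field_simp
  ring

theorem two_parameter_gronwall_iterate_general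
    (T X : ℝ) (f : ℝ × ℝ → ℝ) (hmeas : Measurable f)
    (hnonneg : ∀ t ∈ Icc (0 : ℝ) T, ∀ x ∈ Icc (0 : ℝ) X, 0 ≤ f (t, x))
    (hbdd : ∃ M : ℝ, ∀ t ∈ Icc (0 : ℝ) T, ∀ x ∈ Icc (0 : ℝ) X, f (t, x) ≤ M)
    (C₀ : ℝ) (hC₀ : 0 < C₀)
    (hineq : ∀ t ∈ Icc (0 : ℝ) T, ∀ x ∈ Icc (0 : ℝ) X,
      f (t, x) ≤ C₀ * ∫ s in (0 : ℝ)..t, ∫ a in (0 : ℝ)..x, f (s, a)) :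
    ∀ n : ℕ, ∀ t ∈ Icc (0 : ℝ) T, ∀ x ∈ Icc (0 : ℝ) X,
      f (t, x) ≤ C₀ ^ n * (t * x) ^ n / ((n.factorial : ℝ)) ^ 2
        * sSup (f '' Icc ((0 : ℝ), (0 : ℝ)) (T, X)) := by
  obtain ⟨M, hM⟩ := hbdd
  rw [← Icc_prod_Icc]
  set R := Icc (0 : ℝ) T ×ˢ Icc (0 : ℝ) X
  set S := sSup (f '' R)
  have hR : IsCompact R := isCompact_Icc.prod isCompact_Icc
  have hfM : ∀ p ∈ R, ‖f p‖ ≤ M := fun p hp => by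
    rw [Real.norm_of_nonneg (hnonneg _ hp.1 _ hp.2)]
    exact hM _ hp.1 _ hp.2
  have hfS : ∀ p ∈ R, f p ≤ S := fun p hp =>
    le_csSup ⟨M, forall_mem_image.2 fun q hq => (le_abs_self _).trans (hfM q hq)⟩
      (mem_image_of_mem f hp)
  have hf : IntegrableOn f R :=
    Measure.integrableOn_of_bounded hR.measure_lt_top.ne hmeas.aestronglyMeasurable
      ((ae_restrict_iff' (measurableSet_Icc.prod measurableSet_Icc)).2 (ae_of_all _ hfM))
  have hg (n : ℕ) : IntegrableOn (gronwallIterate C₀ S n) R :=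
    (continuous_gronwallIterate _ _ _).continuousOn.integrableOn_compact hR
  intro n
  induction n with
  | zero => intro t ht x hx; simpa using hfS (t, x) ⟨ht, hx⟩
  | succ n ih =>
    intro t ht x hx
    have hsub : Ioc 0 t ×ˢ Ioc 0 x ⊆ R := fun p hp =>
      ⟨⟨hp.1.1.le, hp.1.2.trans ht.2⟩, ⟨hp.2.1.le, hp.2.2.trans hx.2⟩⟩
    calc f (t, x)
        ≤ C₀ * ∫ s in (0 : ℝ)..t, ∫ a in (0 : ℝ)..x, f (s, a) := hineq t ht x hx
      _ ≤ C₀ * ∫ s in (0 : ℝ)..t, ∫ a in (0 : ℝ)..x, gronwallIterate C₀ S n (s, a) :=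
        mul_le_mul_of_nonneg_left (intervalIntegral_intervalIntegral_mono ht.1 hx.1
          (hf.mono_set hsub) ((hg n).mono_set hsub)
          fun p hp => ih p.1 (hsub hp).1 p.2 (hsub hp).2) hC₀.le
      _ = _ := mul_integral_integral_gronwallIterate _ _ _ _ _

/-- Iterating the two-parameter integral inequality `f(t,x) ≤ C₀ ∫₀ᵗ∫₀ˣ f` `n` times gives
`f(t,x) ≤ C₀ⁿ (t·x)ⁿ/(n!)² · sup_{R} f` on `R = [0,T] × [0,X]`. -/
theorem two_parameter_gronwall_iterate
    (T X : ℝ) (hT : 0 < T) (hX : 0 < X) (f : ℝ × ℝ → ℝ) (hmeas : Measurable f)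
    (hnonneg : ∀ t ∈ Icc (0 : ℝ) T, ∀ x ∈ Icc (0 : ℝ) X, 0 ≤ f (t, x))
    (hbdd : ∃ M : ℝ, ∀ t ∈ Icc (0 : ℝ) T, ∀ x ∈ Icc (0 : ℝ) X, f (t, x) ≤ M)
    (C₀ : ℝ) (hC₀ : 0 < C₀)
    (hineq : ∀ t ∈ Icc (0 : ℝ) T, ∀ x ∈ Icc (0 : ℝ) X,
      f (t, x) ≤ C₀ * ∫ s in (0 : ℝ)..t, ∫ a in (0 : ℝ)..x, f (s, a)) :
    ∀ n : ℕ, ∀ t ∈ Icc (0 : ℝ) T, ∀ x ∈ Icc (0 : ℝ) X,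
      f (t, x) ≤ C₀ ^ n * (t * x) ^ n / ((n.factorial : ℝ)) ^ 2
        * sSup (f '' Icc ((0 : ℝ), (0 : ℝ)) (T, X)) :=
  two_parameter_gronwall_iterate_general T X f hmeas hnonneg hbdd C₀ hC₀ hineq
end

section
/- Let d ≥ 1, let M be a d×d real matrix and y₀ ∈ ℝᵈ. Define u : ℝ² → ℝᵈ by u(t,x) := (∑_{n=0}^∞ ((t·x)ⁿ/(n!)²) · Mⁿ) · y₀, the series converging absolutely. Then for all (t,x) ∈ ℝ², u(t,x) = y₀ + ∫₀ᵗ ∫₀ˣ M · u(s,a) da ds; that is, u solves the two-parameter linear Volterra integral equation u(t,x) = y₀ + M ∫_{R_{(t,x)}} u(ζ) dζ. -/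
/-!
Writing `u(t,x) = ∑ₙ ((t x)ⁿ / (n!)²) • Mⁿ y₀`, the double integral of `(s a)ⁿ` over `[0,t] × [0,x]`
is `(t x)ⁿ⁺¹ / (n+1)²`, and `(n!)² (n+1)² = ((n+1)!)²`; so integrating term by term and applying
`M` shifts the series by one index, which is `u - y₀`. The factorial squared dominates any
geometric growth `‖Mⁿ y₀‖ ≤ Cⁿ K`, which justifies the interchange of sum and integral.
-/

open Matrix MeasureTheory

open scoped Nat

theorem Matrix.tsum_mulVec {ι m n R : Type*} [NonUnitalNonAssocSemiring R] [TopologicalSpace R]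
    [IsTopologicalSemiring R] [T2Space R] [Fintype n] {A : ι → Matrix m n R} (hA : Summable A)
    (y : n → R) : (∑' i, A i) *ᵥ y = ∑' i, A i *ᵥ y :=
  hA.map_tsum (mulVec.addMonoidHomLeft y) (continuous_id.matrix_mulVec continuous_const)

/-- Needs no `NormOneClass`, unlike `norm_pow_le`: `‖(1 : Matrix (Fin 0) (Fin 0) ℝ)‖ = 0`. -/
theorem norm_pow_le_pow_mul_norm_one {R : Type*} [SeminormedRing R] (a : R) (n : ℕ) :
    ‖a ^ n‖ ≤ ‖a‖ ^ n * ‖(1 : R)‖ := by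
  induction n with
  | zero => simp
  | succ n ih =>
    rw [pow_succ', pow_succ', mul_assoc]
    exact (norm_mul_le _ _).trans (mul_le_mul_of_nonneg_left ih (norm_nonneg a))

section

variable {E : Type*} [NormedAddCommGroup E] [NormedSpace ℝ E]

theorem norm_pow_div_factorial_sq_smul_le {r C K : ℝ} {n : ℕ} {y : E} (hy : ‖y‖ ≤ C ^ n * K) :
    ‖(r ^ n / (n ! : ℝ) ^ 2) • y‖ ≤ K * (|r| * C) ^ n / n ! := by
  have hfac : (1 : ℝ) ≤ n ! := mod_cast n.factorial_pos
  have hcoeff : |r ^ n / (n ! : ℝ) ^ 2| ≤ |r| ^ n / n ! := by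
    rw [abs_div, abs_pow, abs_of_nonneg (by positivity : (0 : ℝ) ≤ (n ! : ℝ) ^ 2)]
    exact div_le_div_of_nonneg_left (by positivity) (by positivity) (by nlinarith)
  calc ‖(r ^ n / (n ! : ℝ) ^ 2) • y‖ ≤ |r| ^ n / n ! * (C ^ n * K) := by
        rw [norm_smul, Real.norm_eq_abs]
        exact mul_le_mul hcoeff hy (norm_nonneg y) (by positivity)
    _ = K * (|r| * C) ^ n / n ! := by ring

theorem intervalIntegral_tsum_pow_smul [CompleteSpace E] {w : ℕ → E} {L R : ℝ}
    (hw : ∀ n, ‖w n‖ ≤ L * R ^ n / n !) (x : ℝ) :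
    ∫ a in 0..x, ∑' n, a ^ n • w n = ∑' n : ℕ, (x ^ (n + 1) / (n + 1)) • w n := by
  have hbound : ∀ n, ∀ a ∈ Set.uIoc 0 x, ‖a ^ n • w n‖ ≤ |x| ^ n * ‖w n‖ := by
    intro n a ha
    have : |a| ≤ |x| := by
      simpa using Set.abs_sub_left_of_mem_uIcc (Set.uIoc_subset_uIcc ha)
    rw [norm_smul, norm_pow, Real.norm_eq_abs]
    gcongr
  have hsummable : Summable fun n => |x| ^ n * ‖w n‖ := by
    refine .of_nonneg_of_le (fun n => by positivity) (fun n => ?_)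
      ((Real.summable_pow_div_factorial (|x| * R)).mul_left L)
    calc |x| ^ n * ‖w n‖ ≤ |x| ^ n * (L * R ^ n / n !) := by gcongr; exact hw n
      _ = L * ((|x| * R) ^ n / n !) := by ring
  have hsum := intervalIntegral.hasSum_integral_of_dominated_convergence
    (μ := volume) (F := fun n a => a ^ n • w n) (f := fun a => ∑' n, a ^ n • w n) (fun n _ => |x| ^ n * ‖w n‖)
    (fun n => ((continuous_pow n).smul continuous_const).aestronglyMeasurable)
    (fun n => ae_of_all _ (hbound n)) (ae_of_all _ fun _ _ => hsummable)
    intervalIntegrable_const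
    (ae_of_all _ fun a ha =>
      (Summable.of_norm_bounded hsummable fun n => hbound n a ha).hasSum)
  rw [← hsum.tsum_eq]
  refine tsum_congr fun n => ?_
  rw [intervalIntegral.integral_smul_const, integral_pow, zero_pow n.succ_ne_zero, sub_zero]

variable [CompleteSpace E]

/-- With `v n = Mⁿ y₀` this is the paper's kernel applied to `y₀`, `f(t x M) y₀`. -/
noncomputable def goursatSeries (v : ℕ → E) (t x : ℝ) : E :=
  ∑' n, ((t * x) ^ n / (n ! : ℝ) ^ 2) • v n

theorem summable_goursatSeries {v : ℕ → E} {C K : ℝ} (hv : ∀ n, ‖v n‖ ≤ C ^ n * K) (r : ℝ) :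
    Summable fun n => (r ^ n / (n ! : ℝ) ^ 2) • v n :=
  .of_norm_bounded ((Real.summable_pow_div_factorial (|r| * C)).mul_left K)
    fun n => (norm_pow_div_factorial_sq_smul_le (hv n)).trans_eq (mul_div_assoc _ _ _)

theorem intervalIntegral_goursatSeries {v : ℕ → E} {C K : ℝ} (hv : ∀ n, ‖v n‖ ≤ C ^ n * K)
    (s x : ℝ) : ∫ a in 0..x, goursatSeries v s a =
      ∑' n : ℕ, s ^ n • ((x ^ (n + 1) / (n + 1) / (n ! : ℝ) ^ 2) • v n) := by
  have hseries : goursatSeries v s = fun a => ∑' n, a ^ n • ((s ^ n / (n ! : ℝ) ^ 2) • v n) := by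
    ext a
    refine tsum_congr fun n => ?_
    rw [smul_smul]
    congr 1
    ring
  rw [hseries, intervalIntegral_tsum_pow_smul (fun n => norm_pow_div_factorial_sq_smul_le (hv n)) x]
  refine tsum_congr fun n => ?_
  rw [smul_smul, smul_smul]
  congr 1
  ring

theorem goursatSeries_eq_add_integral {v : ℕ → E} {C K : ℝ} (hv : ∀ n, ‖v n‖ ≤ C ^ n * K)
    (t x : ℝ) : goursatSeries v t x =
      v 0 + ∫ s in 0..t, ∫ a in 0..x, goursatSeries (fun n => v (n + 1)) s a := by
  have hv' : ∀ n, ‖v (n + 1)‖ ≤ C ^ n * (C * K) := fun n => (hv (n + 1)).trans_eq (by ring)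
  have hcoeff : ∀ n : ℕ, ‖(x ^ (n + 1) / (n + 1) / (n ! : ℝ) ^ 2) • v (n + 1)‖ ≤
      |x| * (C * K) * (|x| * C) ^ n / n ! := by
    intro n
    have hy : ‖(x / (n + 1)) • v (n + 1)‖ ≤ C ^ n * (|x| * (C * K)) := by
      rw [norm_smul, Real.norm_eq_abs, abs_div, abs_of_pos (by positivity : (0 : ℝ) < n + 1)]
      calc |x| / (n + 1) * ‖v (n + 1)‖ ≤ |x| * (C ^ n * (C * K)) := by
            gcongr
            · exact div_le_self (abs_nonneg x) (by linarith [n.cast_nonneg (α := ℝ)])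
            · exact hv' n
        _ = C ^ n * (|x| * (C * K)) := by ring
    convert norm_pow_div_factorial_sq_smul_le (r := x) hy using 2
    rw [smul_smul]
    congr 1
    ring
  simp_rw [intervalIntegral_goursatSeries hv']
  rw [intervalIntegral_tsum_pow_smul hcoeff, goursatSeries,
    (summable_goursatSeries hv (t * x)).tsum_eq_zero_add]
  simp only [pow_zero, Nat.factorial_zero, Nat.cast_one, one_pow, div_one, one_smul, smul_smul]
  congr 1
  refine tsum_congr fun n => ?_
  congr 1
  rw [Nat.factorial_succ]
  push_cast
  field_simp
  ring

end

attribute [local instance] Matrix.linftyOpNormedRing Matrix.linftyOpNormedAlgebra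

theorem volterra_series_solves_integral_equation_general
    (d : ℕ) (M : Matrix (Fin d) (Fin d) ℝ) (y₀ : Fin d → ℝ)
    (u : ℝ × ℝ → Fin d → ℝ)
    (hu : ∀ t x : ℝ,
      u (t, x) = (∑' n : ℕ, ((t * x) ^ n / ((n.factorial : ℝ)) ^ 2) • M ^ n).mulVec y₀) :
    ∀ t x : ℝ,
      u (t, x) = y₀ + ∫ s in (0 : ℝ)..t, ∫ a in (0 : ℝ)..x, M.mulVec (u (s, a)) := by
  set v : ℕ → Fin d → ℝ := fun n => (M ^ n) *ᵥ y₀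
  have hv : ∀ n, ‖v n‖ ≤ ‖M‖ ^ n * (‖(1 : Matrix (Fin d) (Fin d) ℝ)‖ * ‖y₀‖) := fun n =>
    calc ‖v n‖ ≤ ‖M ^ n‖ * ‖y₀‖ := linfty_opNorm_mulVec _ _
      _ ≤ ‖M‖ ^ n * ‖(1 : Matrix (Fin d) (Fin d) ℝ)‖ * ‖y₀‖ := by
        gcongr; exact norm_pow_le_pow_mul_norm_one M n
      _ = _ := mul_assoc _ _ _
  have hsummable (r : ℝ) : Summable fun n => (r ^ n / (n ! : ℝ) ^ 2) • M ^ n :=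
    summable_goursatSeries (norm_pow_le_pow_mul_norm_one M) r
  have hu_series (s a : ℝ) : u (s, a) = goursatSeries v s a := by
    rw [hu, tsum_mulVec (hsummable _)]
    simp only [smul_mulVec, v, goursatSeries]
  have hMu_series (s a : ℝ) : M *ᵥ u (s, a) = goursatSeries (fun n => v (n + 1)) s a := by
    rw [hu, mulVec_mulVec, ← (hsummable _).tsum_mul_left, tsum_mulVec ((hsummable _).mul_left M)]
    simp only [mul_smul_comm, ← pow_succ', smul_mulVec, v, goursatSeries]
  intro t x
  rw [hu_series, goursatSeries_eq_add_integral hv]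
  simp only [hMu_series, v, pow_zero, one_mulVec]

/-- The matrix-series function `u(t,x) = (∑_{n≥0} ((t·x)ⁿ/(n!)²) Mⁿ) y₀` solves the
two-parameter linear Volterra integral equation `u(t,x) = y₀ + ∫₀ᵗ∫₀ˣ M u(s,a) da ds`. -/
theorem volterra_series_solves_integral_equation
    (d : ℕ) (hd : 1 ≤ d) (M : Matrix (Fin d) (Fin d) ℝ) (y₀ : Fin d → ℝ)
    (u : ℝ × ℝ → Fin d → ℝ)
    (hu : ∀ t x : ℝ,
      u (t, x) = (∑' n : ℕ, ((t * x) ^ n / ((n.factorial : ℝ)) ^ 2) • M ^ n).mulVec y₀) :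
    ∀ t x : ℝ,
      u (t, x) = y₀ + ∫ s in (0 : ℝ)..t, ∫ a in (0 : ℝ)..x, M.mulVec (u (s, a)) :=
  volterra_series_solves_integral_equation_general d M y₀ u hu
end

section
/- Define x : ℕ → ℝ recursively by x₀ = 1 and xₙ = −∑_{j=1}^{n} ((−1)^j/(j!)²) · x_{n−j} for n ≥ 1, and let r₀ := inf{t > 0 : ∑_{j=0}^∞ (−1)^j t^j/(j!)² = 0}. Then for every s with 0 ≤ s < r₀, the series ∑_{n=0}^∞ xₙ sⁿ converges (i.e. the function n ↦ xₙ sⁿ is summable). -/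
/-!
The coefficients `xₙ` are nonnegative: the recursion writes `x_{n+1}` as an alternating sum with
decreasing terms, which pins `x_{n+1}` between `xₙ / 2` and `xₙ`.

Let `F(z) = ∑ (-1)ʲ zʲ / (j!)²`, an entire function, so that `G(z) = ∑ xₙ zⁿ` satisfies `F G = 1`
on the disc of convergence. Nonnegative coefficients give `‖G z‖ ≤ G ‖z‖` there (Pringsheim), hence
`‖F ‖z‖‖ ≤ ‖F z‖`, and by continuity this persists on the closed disc. If the radius `ρ` of `G`
were smaller than `r₀`, a zero `z` of `F` with `‖z‖ ≤ ρ` would give the real zero `‖z‖ < r₀`, which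
is impossible; so `1 / F` is holomorphic on a strictly larger disc, and its Taylor series, which is
`G`, converges beyond `ρ`.
-/

open BigOperators

open Finset Metric FormalMultilinearSeries
open scoped NNReal ENNReal

theorem HasFPowerSeriesAt.le_radius_of_differentiableOn {E : Type*} [NormedAddCommGroup E]
    [NormedSpace ℂ E] [CompleteSpace E] {f : ℂ → E} {p : FormalMultilinearSeries ℂ ℂ E} {c : ℂ}
    {R : ℝ≥0} (hf : HasFPowerSeriesAt f p c) (hd : DifferentiableOn ℂ f (closedBall c R)) :
    (R : ℝ≥0∞) ≤ p.radius := by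
  rcases eq_zero_or_pos R with rfl | hR
  · simp
  have hR' := hd.hasFPowerSeriesOnBall hR
  rw [hf.eq_formalMultilinearSeries hR'.hasFPowerSeriesAt]
  exact hR'.r_le

noncomputable def ofRealScalars (c : ℕ → ℝ) : FormalMultilinearSeries ℂ ℂ ℂ :=
  ofScalars ℂ fun n => (c n : ℂ)

namespace ofRealScalars

variable (c : ℕ → ℝ)

theorem apply_eq (n : ℕ) (z : ℂ) : (ofRealScalars c n fun _ => z) = c n * z ^ n := by
  simp [ofRealScalars, mul_comm]

theorem norm_eq (n : ℕ) : ‖ofRealScalars c n‖ = |c n| := by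
  simp [ofRealScalars]

theorem norm_apply (n : ℕ) (z : ℂ) : ‖ofRealScalars c n fun _ => z‖ = |c n| * ‖z‖ ^ n := by
  rw [apply_eq, norm_mul, Complex.norm_real, Real.norm_eq_abs, norm_pow]

theorem sum_ofReal (t : ℝ) : (ofRealScalars c).sum t = ↑(∑' n, c n * t ^ n) := by
  simp [ofRealScalars, FormalMultilinearSeries.sum, Complex.ofReal_tsum, mul_comm]

end ofRealScalars

section Pringsheim

variable {a : ℕ → ℝ} {F : ℂ → ℂ}

theorem ofRealScalars.norm_sum_le_norm_sum_norm (ha : ∀ n, 0 ≤ a n) {z : ℂ}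
    (hz : z ∈ eball 0 (ofRealScalars a).radius) :
    ‖(ofRealScalars a).sum z‖ ≤ ‖(ofRealScalars a).sum ‖z‖‖ := by
  rw [ofRealScalars.sum_ofReal, Complex.norm_real,
    Real.norm_of_nonneg (tsum_nonneg fun n => mul_nonneg (ha n) (pow_nonneg (norm_nonneg z) n))]
  calc ‖(ofRealScalars a).sum z‖ ≤ ∑' n, ‖ofRealScalars a n fun _ => z‖ :=
        norm_tsum_le_tsum_norm ((ofRealScalars a).summable_norm_apply hz)
    _ = ∑' n, a n * ‖z‖ ^ n := by simp only [ofRealScalars.norm_apply, abs_of_nonneg (ha _)]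

theorem norm_apply_norm_le_norm_of_mul_sum_eq_one (ha : ∀ n, 0 ≤ a n)
    (hmul : ∀ z ∈ eball 0 (ofRealScalars a).radius, F z * (ofRealScalars a).sum z = 1) {z : ℂ}
    (hz : z ∈ eball 0 (ofRealScalars a).radius) : ‖F ‖z‖‖ ≤ ‖F z‖ := by
  have hz' : (‖z‖ : ℂ) ∈ eball 0 (ofRealScalars a).radius := by
    rwa [mem_eball_zero_iff, ← enorm_norm, Complex.norm_real, norm_norm, enorm_norm,
      ← mem_eball_zero_iff]
  have hinv : ∀ w ∈ eball 0 (ofRealScalars a).radius, ‖F w‖ = ‖(ofRealScalars a).sum w‖⁻¹ :=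
    fun w hw => eq_inv_of_mul_eq_one_left (by rw [← norm_mul, hmul w hw, norm_one])
  have hpos : 0 < ‖(ofRealScalars a).sum z‖ :=
    norm_pos_iff.mpr (right_ne_zero_of_mul_eq_one (hmul z hz))
  rw [hinv _ hz, hinv _ hz']
  exact inv_anti₀ hpos (ofRealScalars.norm_sum_le_norm_sum_norm ha hz)

theorem ofReal_le_radius_of_mul_sum_eq_one (ha : ∀ n, 0 ≤ a n) (hF : Differentiable ℂ F)
    (hpos : 0 < (ofRealScalars a).radius)
    (hmul : ∀ z ∈ eball 0 (ofRealScalars a).radius, F z * (ofRealScalars a).sum z = 1) {r : ℝ}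
    (hr : ∀ t : ℝ, 0 < t → t < r → F t ≠ 0) : ENNReal.ofReal r ≤ (ofRealScalars a).radius := by
  by_contra! hlt
  obtain ⟨ρ, hρ⟩ : ∃ ρ : ℝ≥0, (ρ : ℝ≥0∞) = (ofRealScalars a).radius :=
    ⟨_, ENNReal.coe_toNNReal hlt.ne_top⟩
  have hρ0 : 0 < (ρ : ℝ) := ENNReal.coe_pos.mp (hρ ▸ hpos)
  have hball : ball (0 : ℂ) ρ = eball 0 (ofRealScalars a).radius := by rw [← hρ, eball_coe]
  have hρr : (ρ : ℝ) < r := by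
    rw [← hρ, ← ENNReal.ofReal_coe_nnreal] at hlt
    exact (ENNReal.ofReal_lt_ofReal_iff_of_nonneg ρ.2).mp hlt
  have hmin : ∀ z ∈ closedBall (0 : ℂ) ρ, ‖F ‖z‖‖ ≤ ‖F z‖ := by
    have hclosed : IsClosed {z : ℂ | ‖F ‖z‖‖ ≤ ‖F z‖} :=
      isClosed_le (hF.continuous.comp (by fun_prop)).norm hF.continuous.norm
    rw [← closure_ball _ hρ0.ne']
    refine closure_minimal (fun z hz => ?_) hclosed
    exact norm_apply_norm_le_norm_of_mul_sum_eq_one ha hmul (hball ▸ hz)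
  have hne : ∀ z ∈ closedBall (0 : ℂ) ρ, F z ≠ 0 := by
    intro z hz hFz
    have h0 : F ‖z‖ = 0 := norm_le_zero_iff.mp (by simpa [hFz] using hmin z hz)
    rcases (norm_nonneg z).eq_or_lt with hz0 | hz0
    · have := hmul 0 (mem_eball_self hpos)
      rw [← hz0, Complex.ofReal_zero] at h0
      simp [h0] at this
    · exact hr ‖z‖ hz0 (lt_of_le_of_lt (mem_closedBall_zero_iff.mp hz) hρr) h0
  obtain ⟨ε, hε, hsub⟩ := (isCompact_closedBall (0 : ℂ) ρ).exists_cthickening_subset_open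
    (isOpen_ne_fun hF.continuous continuous_const) hne
  rw [cthickening_closedBall hε.le ρ.coe_nonneg] at hsub
  have hinv : HasFPowerSeriesAt (fun z => (F z)⁻¹) (ofRealScalars a) 0 := by
    refine ((ofRealScalars a).hasFPowerSeriesOnBall hpos).hasFPowerSeriesAt.congr ?_
    filter_upwards [eball_mem_nhds 0 hpos] with z hz
    exact eq_inv_of_mul_eq_one_right (hmul z hz)
  lift ε to ℝ≥0 using hε.le
  have hle := hinv.le_radius_of_differentiableOn (R := ε + ρ)
    (hF.differentiableOn.inv (by exact_mod_cast hsub))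
  rw [← hρ, ENNReal.coe_le_coe] at hle
  exact hε.ne' (by simpa using hle)

end Pringsheim

theorem ofRealScalars.sum_mul_sum_eq_one {a b : ℕ → ℝ}
    (hrec : ∀ n, ∑ j ∈ range (n + 1), b j * a (n - j) = if n = 0 then 1 else 0) {z : ℂ}
    (hzb : z ∈ eball 0 (ofRealScalars b).radius) (hza : z ∈ eball 0 (ofRealScalars a).radius) :
    (ofRealScalars b).sum z * (ofRealScalars a).sum z = 1 := by
  rw [FormalMultilinearSeries.sum, FormalMultilinearSeries.sum,
    tsum_mul_tsum_eq_tsum_sum_range_of_summable_norm ((ofRealScalars b).summable_norm_apply hzb)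
      ((ofRealScalars a).summable_norm_apply hza)]
  have hterm : ∀ n, ∑ k ∈ range (n + 1),
      (ofRealScalars b k fun _ => z) * (ofRealScalars a (n - k) fun _ => z) =
        if n = 0 then 1 else 0 := by
    intro n
    calc _ = z ^ n * ↑(∑ k ∈ range (n + 1), b k * a (n - k)) := by
          rw [Complex.ofReal_sum, mul_sum]
          refine sum_congr rfl fun k hk => ?_
          rw [ofRealScalars.apply_eq, ofRealScalars.apply_eq,
            ← pow_sub_mul_pow z (Nat.lt_succ_iff.mp (mem_range.mp hk))]
          push_cast
          ring
      _ = _ := by rw [hrec]; split_ifs <;> simp [*]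
  rw [tsum_congr hterm, tsum_ite_eq]

theorem summable_mul_pow_of_mul_sum_eq_one {a b : ℕ → ℝ} (ha : ∀ n, 0 ≤ a n)
    (ha_pos : 0 < (ofRealScalars a).radius) (hb : (ofRealScalars b).radius = ⊤)
    (hrec : ∀ n, ∑ j ∈ range (n + 1), b j * a (n - j) = if n = 0 then 1 else 0) {r : ℝ}
    (hr : ∀ t : ℝ, 0 < t → t < r → ∑' n, b n * t ^ n ≠ 0) {s : ℝ} (hs : 0 ≤ s) (hsr : s < r) :
    Summable fun n => a n * s ^ n := by
  have hF : Differentiable ℂ (ofRealScalars b).sum := by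
    have := ((ofRealScalars b).hasFPowerSeriesOnBall (by simp [hb])).differentiableOn
    rwa [hb, eball_top, differentiableOn_univ] at this
  have hle := ofReal_le_radius_of_mul_sum_eq_one ha hF ha_pos
    (fun z hz => ofRealScalars.sum_mul_sum_eq_one hrec (by simp [hb]) hz)
    (fun t ht htr => by
      rw [ofRealScalars.sum_ofReal]; exact_mod_cast hr t ht htr)
  have hlt : (s.toNNReal : ℝ≥0∞) < (ofRealScalars a).radius :=
    lt_of_lt_of_le ((ENNReal.ofReal_lt_ofReal_iff_of_nonneg hs).mpr hsr) hle
  refine ((ofRealScalars a).summable_norm_mul_pow hlt).congr fun n => ?_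
  rw [ofRealScalars.norm_eq, abs_of_nonneg (ha n), Real.coe_toNNReal s hs]

theorem Antitone.sum_range_succ_alternating_mem_Icc {f : ℕ → ℝ} (hf : Antitone f)
    (hf0 : ∀ i, 0 ≤ f i) (n : ℕ) :
    ∑ i ∈ range (n + 1), (-1) ^ i * f i ∈ Set.Icc (f 0 - f 1) (f 0) := by
  induction n generalizing f with
  | zero => simpa using hf0 1
  | succ n ih =>
    have hg : Antitone fun i => f (i + 1) := hf.comp_monotone fun _ _ h => Nat.succ_le_succ h
    obtain ⟨hlo, hhi⟩ := ih hg fun i => hf0 (i + 1)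
    have h12 : f 2 ≤ f 1 := hf (by norm_num)
    rw [sum_range_succ']
    simp only [pow_succ, mul_neg_one, neg_mul, sum_neg_distrib, pow_zero, one_mul] at hlo hhi ⊢
    constructor <;> linarith

noncomputable def besselCoeff (j : ℕ) : ℝ := (-1 : ℝ) ^ j / (j.factorial : ℝ) ^ 2

theorem radius_ofRealScalars_besselCoeff : (ofRealScalars besselCoeff).radius = ⊤ := by
  refine radius_eq_top_of_summable_norm _ fun r => ?_
  refine (Real.summable_pow_div_factorial r).of_nonneg_of_le (fun _ => by positivity) fun n => ?_
  have h1 : (1 : ℝ) ≤ n.factorial := by exact_mod_cast n.factorial_pos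
  rw [ofRealScalars.norm_eq, besselCoeff, abs_div, abs_pow, abs_neg, abs_one, one_pow, abs_pow,
    Nat.abs_cast, one_div_mul_eq_div]
  exact div_le_div_of_nonneg_left (by positivity) (by positivity) (le_self_pow₀ h1 two_ne_zero)

namespace BesselReciprocal

variable {x : ℕ → ℝ}

theorem succ_eq_neg_sum_range_besselCoeff
    (hxn : ∀ n : ℕ, 1 ≤ n → x n = -∑ j ∈ Icc 1 n, besselCoeff j * x (n - j)) (m : ℕ) :
    x (m + 1) = -∑ i ∈ range (m + 1), besselCoeff (i + 1) * x (m - i) := by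
  rw [hxn (m + 1) m.succ_pos, ← Ico_add_one_right_eq_Icc, sum_Ico_eq_sum_range]
  simp only [Nat.add_sub_cancel, add_comm 1, Nat.add_sub_add_right]

variable (hrec : ∀ m, x (m + 1) = -∑ i ∈ range (m + 1), besselCoeff (i + 1) * x (m - i))
include hrec

theorem sum_besselCoeff_mul_eq_ite (hx0 : x 0 = 1) (n : ℕ) :
    ∑ j ∈ range (n + 1), besselCoeff j * x (n - j) = if n = 0 then 1 else 0 := by
  cases n with
  | zero => simp [besselCoeff, hx0]
  | succ m =>
    rw [sum_range_succ']
    simp only [Nat.add_sub_add_right, Nat.sub_zero]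
    rw [hrec m]
    simp [besselCoeff]

theorem eq_sum_alternating (m : ℕ) :
    x (m + 1) = ∑ i ∈ range (m + 1), (-1) ^ i * (x (m - i) / ((i + 1).factorial : ℝ) ^ 2) := by
  rw [hrec m, ← sum_neg_distrib]
  refine sum_congr rfl fun i _ => ?_
  rw [besselCoeff, pow_succ]
  ring

theorem half_le_succ_and_succ_le (hx0 : 0 ≤ x 0) (n : ℕ) :
    x n / 2 ≤ x (n + 1) ∧ x (n + 1) ≤ x n := by
  induction n using Nat.strong_induction_on with
  | _ n ih =>
  have hnonneg : ∀ m ≤ n, 0 ≤ x m := by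
    intro m hm
    induction m with
    | zero => exact hx0
    | succ m ihm => linarith [(ih m (by omega)).1, ihm (by omega)]
  have hstep : ∀ i, x (n - (i + 1)) ≤ 2 * x (n - i) := by
    intro i
    rcases lt_or_ge i n with hi | hi
    · have := (ih (n - (i + 1)) (by omega)).1
      rw [show n - (i + 1) + 1 = n - i by omega] at this
      linarith
    · rw [show n - (i + 1) = 0 by omega, show n - i = 0 by omega]
      linarith
  set f : ℕ → ℝ := fun i => x (n - i) / ((i + 1).factorial : ℝ) ^ 2 with hf
  have hf0 : ∀ i, 0 ≤ f i := fun i => div_nonneg (hnonneg _ (Nat.sub_le n i)) (by positivity)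
  have hanti : Antitone f := by
    refine antitone_nat_of_succ_le fun i => ?_
    have hfac : ((i + 1 + 1).factorial : ℝ) ^ 2 =
        ((i : ℝ) + 2) ^ 2 * ((i + 1).factorial : ℝ) ^ 2 := by
      rw [Nat.factorial_succ (i + 1)]
      push_cast
      ring
    simp only [hf]
    rw [hfac, ← div_div]
    gcongr
    rw [div_le_iff₀ (by positivity)]
    have h2 : (2 : ℝ) ≤ ((i : ℝ) + 2) ^ 2 := by nlinarith [i.cast_nonneg (α := ℝ)]
    nlinarith [hstep i, mul_le_mul_of_nonneg_left h2 (hnonneg (n - i) (Nat.sub_le n i))]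
  obtain ⟨hlo, hhi⟩ := hanti.sum_range_succ_alternating_mem_Icc hf0 n
  rw [← eq_sum_alternating hrec] at hlo hhi
  simp [hf] at hlo hhi
  have hprev : x (n - 1) ≤ 2 * x n := by simpa using hstep 0
  constructor <;> linarith

theorem nonneg (hx0 : 0 ≤ x 0) (n : ℕ) : 0 ≤ x n := by
  induction n with
  | zero => exact hx0
  | succ n ih => linarith [(half_le_succ_and_succ_le hrec hx0 n).1]

theorem one_le_radius (hx0 : x 0 = 1) : 1 ≤ (ofRealScalars x).radius := by
  have hx0' : 0 ≤ x 0 := hx0 ▸ zero_le_one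
  have hanti : Antitone x :=
    antitone_nat_of_succ_le fun n => (half_le_succ_and_succ_le hrec hx0' n).2
  simpa using (ofRealScalars x).le_radius_of_bound 1 (r := 1) fun n => by
    rw [ofRealScalars.norm_eq, abs_of_nonneg (nonneg hrec hx0' n), NNReal.coe_one, one_pow,
      mul_one, ← hx0]
    exact hanti n.zero_le

end BesselReciprocal

theorem tsum_besselCoeff_mul_pow_ne_zero {t : ℝ} (ht : 0 < t) (htr : t < r₀) :
    ∑' n, besselCoeff n * t ^ n ≠ 0 := by
  intro h
  simp_rw [besselCoeff, div_mul_eq_mul_div] at h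
  have hle : r₀ ≤ t := csInf_le ⟨0, fun _ hy => hy.1.le⟩ ⟨ht, h⟩
  exact hle.not_gt htr

/-- The coefficients of the reciprocal power series of `J₀(2√·)`, defined by `x₀ = 1` and
`xₙ = −∑_{j=1}^{n} ((−1)^j/(j!)²) x_{n−j}`, satisfy: `∑ xₙ sⁿ` converges for `0 ≤ s < r₀`. -/
theorem summable_reciprocal_bessel_coeffs
    (x : ℕ → ℝ) (hx0 : x 0 = 1)
    (hxn : ∀ n : ℕ, 1 ≤ n →
      x n = -∑ j ∈ Finset.Icc 1 n, ((-1 : ℝ) ^ j / ((j.factorial : ℝ)) ^ 2) * x (n - j)) :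
    ∀ s : ℝ, 0 ≤ s → s < r₀ → Summable (fun n : ℕ => x n * s ^ n) := by
  intro s hs hsr
  have hrec := BesselReciprocal.succ_eq_neg_sum_range_besselCoeff hxn
  exact summable_mul_pow_of_mul_sum_eq_one (BesselReciprocal.nonneg hrec (hx0 ▸ zero_le_one))
    (one_pos.trans_le (BesselReciprocal.one_le_radius hrec hx0)) radius_ofRealScalars_besselCoeff
    (BesselReciprocal.sum_besselCoeff_mul_eq_ite hrec hx0)
    (fun t ht htr => tsum_besselCoeff_mul_pow_ne_zero ht htr) hs hsr
end
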